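/- arXiv:2311.01791 — 2 statements merged into one kernel-verified Lean document; each statement's English description precedes it below -/
import Mathlib

section
/- The S-module map S → R_∞^{(3)}/D_∞(R_∞^{(4)}) sending s to the class of s·x_{3,3} is surjective, and its kernel is exactly the ideal of S generated by x_{2,0}² and by the variables x_{n,0} with n ≥ 3; hence R_∞^{(3)}/D_∞(R_∞^{(4)}) ≅ S/(x_{2,0}², x_{n,0} : n ≥ 3) as S-modules. (This is the algebraic form of the theorem that H_st^odd(Λ⁴H̃_ℚ) ≅ (Sym_ℚ(𝓔)/(e₁², e_α, α ≥ 2)){m̄_{0,3}}.) -/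
/-!
Every monomial of weight 3 is an `S`-multiple of `x_{n,3}`, `x_{n,2} x_{m,1}` or
`x_{n,1} x_{m,1} x_{l,1}`, and explicit `D_∞`-preimages reduce each of these modulo
`D_∞(R_∞^{(4)})` to `S·x_{3,3}`; likewise `x_{2,0}² x_{3,3}` and `x_{n,0} x_{3,3}` (`n ≥ 3`) lie in
`D_∞(R_∞^{(4)})`. Conversely, `D_∞` creates no constant terms and
`[∂/∂x_{n,k}, D_∞] = ∂/∂x_{n,k+1}`, so the two functionals `constantCoeff ∘ ∂/∂x_{3,3}` and
`constantCoeff ∘ (∂²/∂x_{2,0}∂x_{3,3} - ∂²/∂x_{3,2}∂x_{2,1} + ∂²/∂x_{2,2}∂x_{3,1})` vanish on the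
image of `D_∞`. On `s·x_{3,3}` they return the constant term and the `x_{2,0}`-coefficient of `s`,
and an element of `S` for which both vanish lies in `(x_{2,0}², x_{n,0} : n ≥ 3)`.
-/

open MvPolynomial

noncomputable section

/-- The index set `{(n,k) : 2 ≤ n, 0 ≤ k ≤ n}` of the variables `x_{n,k}` of `R_∞`. -/
abbrev Idx : Type := {p : ℕ × ℕ // 2 ≤ p.1 ∧ p.2 ≤ p.1}

/-- The polynomial ring `R_∞ = ℚ[x_{n,k} : n ≥ 2, 0 ≤ k ≤ n]`. -/
abbrev Rinf : Type := MvPolynomial Idx ℚ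

/-- The variable `x_{n,k}` (and `0` for out-of-range indices, which never occur below). -/
def xv (n k : ℕ) : Rinf := if h : 2 ≤ n ∧ k ≤ n then X ⟨(n, k), h⟩ else 0

/-- The derivation `D_∞` with `D_∞(x_{n,k}) = x_{n,k−1}` for `1 ≤ k ≤ n` and
`D_∞(x_{n,0}) = 0`. -/
def Dinf : Derivation ℚ Rinf Rinf :=
  MvPolynomial.mkDerivation ℚ fun s : Idx =>
    if s.1.2 = 0 then 0 else xv s.1.1 (s.1.2 - 1)

/-- The weight `wt(x_{n,k}) = k`. -/
def wt : Idx → ℕ := fun s => s.1.2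

/-- `R_∞^{(d)}`: the `ℚ`-span of the monomials of weight `d`. -/
def W (d : ℕ) : Submodule ℚ Rinf := weightedHomogeneousSubmodule ℚ wt d

/-- `S = R_∞^{(0)} = ℚ[x_{n,0} : n ≥ 2]`, as a subalgebra of `R_∞`. -/
def SAlg : Subalgebra ℚ Rinf := Algebra.adjoin ℚ {f : Rinf | ∃ n, 2 ≤ n ∧ f = xv n 0}

lemma xv0_mem (n : ℕ) : xv n 0 ∈ SAlg := by
  by_cases h : 2 ≤ n
  · exact Algebra.subset_adjoin ⟨n, h, rfl⟩
  · have hz : xv n 0 = 0 := by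
      rw [xv, dif_neg]
      exact fun hc => h hc.1
    rw [hz]
    exact Subalgebra.zero_mem _

/-- The element `e_i = x_{i+1,0}` of `S`; below `eS n` denotes `x_{n,0} ∈ S`, so that the
class `e_i` of the paper is `eS (i+1)`. -/
def eS (n : ℕ) : SAlg := ⟨xv n 0, xv0_mem n⟩

lemma MvPolynomial.pderiv_comm {σ R : Type*} [CommRing R] (i j : σ) (p : MvPolynomial σ R) :
    pderiv i (pderiv j p) = pderiv j (pderiv i p) := by
  classical
  have h : ⁅(pderiv i : Derivation R (MvPolynomial σ R) (MvPolynomial σ R)), pderiv (R := R) j⁆ =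
      0 := by
    refine derivation_ext fun k => ?_
    simp only [Derivation.commutator_apply, pderiv_X, Pi.single_apply, Derivation.zero_apply]
    split_ifs <;> simp
  simpa [Derivation.commutator_apply, sub_eq_zero] using congrArg (· p) h

lemma xv_eq (n k : ℕ) (h : 2 ≤ n ∧ k ≤ n) : xv n k = X ⟨(n, k), h⟩ := dif_pos h

lemma xv_eq_zero (n k : ℕ) (h : ¬ (2 ≤ n ∧ k ≤ n)) : xv n k = 0 := dif_neg h

lemma X_eq_xv (v : Idx) : (X v : Rinf) = xv v.1.1 v.1.2 := (xv_eq _ _ v.2).symm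

lemma constantCoeff_xv (n k : ℕ) : constantCoeff (xv n k) = 0 := by
  unfold xv; split_ifs <;> simp

lemma xv_mem_W (n k : ℕ) : xv n k ∈ W k := by
  unfold xv; split_ifs with h
  · exact isWeightedHomogeneous_X ℚ wt (⟨(n, k), h⟩ : Idx)
  · exact zero_mem _

lemma mem_W_mul {f g : Rinf} {a b : ℕ} (hf : f ∈ W a) (hg : g ∈ W b) : f * g ∈ W (a + b) :=
  IsWeightedHomogeneous.mul hf hg

lemma Dinf_X (v : Idx) : Dinf (X v) = if v.1.2 = 0 then 0 else xv v.1.1 (v.1.2 - 1) :=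
  mkDerivation_X _ _ _

lemma Dinf_xv_zero (n : ℕ) : Dinf (xv n 0) = 0 := by
  unfold xv; split_ifs <;> simp [Dinf_X]

lemma Dinf_xv_succ {n k : ℕ} (h : k ≠ n ∨ n < 2) : Dinf (xv n (k + 1)) = xv n k := by
  by_cases hn : 2 ≤ n ∧ k + 1 ≤ n
  · rw [xv_eq n (k + 1) hn, Dinf_X, if_neg k.succ_ne_zero, Nat.add_sub_cancel]
  · rw [xv_eq_zero n (k + 1) hn, xv_eq_zero n k (by omega), map_zero]

lemma constantCoeff_Dinf (p : Rinf) : constantCoeff (Dinf p) = 0 := by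
  induction p using MvPolynomial.induction_on with
  | C q => simp [← algebraMap_eq]
  | add p q hp hq => rw [map_add, map_add, hp, hq, add_zero]
  | mul_X p v hp =>
    rw [Derivation.leibniz, Dinf_X]
    split_ifs <;> simp [hp, constantCoeff_xv]

lemma SAlg_le_W_zero : SAlg.toSubmodule ≤ W 0 := by
  intro s hs
  induction hs using Algebra.adjoin_induction with
  | mem x hx => obtain ⟨n, -, rfl⟩ := hx; exact xv_mem_W n 0
  | algebraMap r => exact isWeightedHomogeneous_C wt r
  | add x y _ _ hx hy => exact add_mem hx hy
  | mul x y _ _ hx hy => exact mem_W_mul hx hy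

lemma derivation_eq_zero_of_mem_SAlg (δ : Derivation ℚ Rinf Rinf) (hδ : ∀ n, δ (xv n 0) = 0)
    {s : Rinf} (hs : s ∈ SAlg) : δ s = 0 := by
  induction hs using Algebra.adjoin_induction with
  | mem x hx => obtain ⟨n, -, rfl⟩ := hx; exact hδ n
  | algebraMap r => exact δ.map_algebraMap r
  | add x y _ _ hx hy => rw [map_add, hx, hy, add_zero]
  | mul x y _ _ hx hy => rw [Derivation.leibniz, hx, hy, smul_zero, smul_zero, add_zero]

lemma mul_mem_of_mem_SAlg {p : Submodule SAlg Rinf} {s f : Rinf} (hs : s ∈ SAlg) (hf : f ∈ p) :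
    s * f ∈ p := by
  simpa only [Subalgebra.smul_def, smul_eq_mul] using p.smul_mem ⟨s, hs⟩ hf

def posWeightProducts : ℕ → Set Rinf
  | 0 => {1}
  | 1 => {f | ∃ n, f = xv n 1}
  | 2 => {f | ∃ n, f = xv n 2} ∪ {f | ∃ n m, f = xv n 1 * xv m 1}
  | 3 => {f | ∃ n, f = xv n 3} ∪ {f | ∃ n m, f = xv n 2 * xv m 1} ∪
      {f | ∃ n m l, f = xv n 1 * xv m 1 * xv l 1}
  | _ => ∅

lemma xv_mul_mem_posWeightProducts (n : ℕ) {k d : ℕ} (hk : 1 ≤ k) (hdk : k + d ≤ 3) {g : Rinf}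
    (hg : g ∈ posWeightProducts d) : xv n k * g ∈ posWeightProducts (k + d) := by
  have hd : d ≤ 2 := by omega
  have hk3 : k ≤ 3 := by omega
  interval_cases d <;> interval_cases k <;> try omega
  all_goals
    simp only [posWeightProducts, Nat.reduceAdd, Set.mem_union, Set.mem_ofPred_eq,
      Set.mem_singleton_iff] at hg ⊢
  · exact ⟨n, by rw [hg, mul_one]⟩
  · exact Or.inl ⟨n, by rw [hg, mul_one]⟩
  · exact Or.inl (Or.inl ⟨n, by rw [hg, mul_one]⟩)
  · obtain ⟨m, rfl⟩ := hg
    exact Or.inr ⟨n, m, rfl⟩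
  · obtain ⟨m, rfl⟩ := hg
    exact Or.inl (Or.inr ⟨n, m, rfl⟩)
  · rcases hg with ⟨m, rfl⟩ | ⟨m, l, rfl⟩
    · exact Or.inl (Or.inr ⟨m, n, mul_comm _ _⟩)
    · exact Or.inr ⟨n, m, l, (mul_assoc _ _ _).symm⟩

lemma X_mul_mem_span_posWeightProducts (v : Idx) {d : ℕ} (hd : wt v + d ≤ 3) {g : Rinf}
    (hg : g ∈ Submodule.span SAlg (posWeightProducts d)) :
    X v * g ∈ Submodule.span SAlg (posWeightProducts (wt v + d)) := by
  by_cases hv : wt v = 0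
  · have hXv : X v ∈ SAlg := by
      rw [X_eq_xv, show v.1.2 = 0 from hv]
      exact xv0_mem _
    rw [hv, zero_add]
    exact mul_mem_of_mem_SAlg hXv hg
  · have hmap :
        (Submodule.span SAlg (posWeightProducts d)).map (LinearMap.mulLeft SAlg (X v)) ≤
          Submodule.span SAlg (posWeightProducts (wt v + d)) := by
      rw [Submodule.map_span, Submodule.span_le]
      rintro _ ⟨g, hg, rfl⟩
      rw [LinearMap.mulLeft_apply, X_eq_xv]
      exact Submodule.subset_span
        (xv_mul_mem_posWeightProducts _ (Nat.one_le_iff_ne_zero.mpr hv) hd hg)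
    exact hmap ⟨g, hg, rfl⟩

lemma X_pow_mul_mem_span_posWeightProducts (v : Idx) (c : ℕ) {d : ℕ} (hd : c * wt v + d ≤ 3)
    {g : Rinf} (hg : g ∈ Submodule.span SAlg (posWeightProducts d)) :
    X v ^ c * g ∈ Submodule.span SAlg (posWeightProducts (c * wt v + d)) := by
  induction c with
  | zero => simpa using hg
  | succ c ih =>
    rw [pow_succ', mul_assoc, show (c + 1) * wt v + d = wt v + (c * wt v + d) by ring]
    exact X_mul_mem_span_posWeightProducts v (by linarith) (ih (by linarith))

lemma monomial_mem_span_posWeightProducts (α : Idx →₀ ℕ) (hα : Finsupp.weight wt α ≤ 3) :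
    monomial α (1 : ℚ) ∈ Submodule.span SAlg (posWeightProducts (Finsupp.weight wt α)) := by
  induction α using Finsupp.induction with
  | zero => exact Submodule.subset_span (by simp [posWeightProducts])
  | single_add v c α _ _ ih =>
    simp only [map_add, Finsupp.weight_single, smul_eq_mul] at hα ⊢
    rw [monomial_single_add]
    exact X_pow_mul_mem_span_posWeightProducts v c hα (ih (by omega))

lemma W_three_le_span_posWeightProducts :
    W 3 ≤ (Submodule.span SAlg (posWeightProducts 3)).restrictScalars ℚ := by
  intro f hf
  induction hf using IsWeightedHomogeneous.induction_on with
  | zero => exact zero_mem _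
  | add p q _ _ hp hq => exact add_mem hp hq
  | monomial α r hα =>
    rw [← mul_one r, ← smul_eq_mul, ← smul_monomial]
    exact Submodule.smul_of_tower_mem _ r (hα ▸ monomial_mem_span_posWeightProducts α hα.le)

def DW4 : Submodule SAlg Rinf where
  toAddSubmonoid := (Submodule.map Dinf.toLinearMap (W 4)).toAddSubmonoid
  smul_mem' := by
    rintro s _ ⟨g, hg, rfl⟩
    refine ⟨s * g, by simpa using mem_W_mul (SAlg_le_W_zero s.2) hg, ?_⟩
    simp [Derivation.leibniz, derivation_eq_zero_of_mem_SAlg Dinf Dinf_xv_zero s.2,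
      Subalgebra.smul_def]

lemma Dinf_mem_DW4 {g : Rinf} (hg : g ∈ W 4) : Dinf g ∈ DW4 := ⟨g, hg, rfl⟩

lemma mem_DW4_of_smul_eq_Dinf {f g : Rinf} (c : ℚ) (hc : c ≠ 0) (hg : g ∈ W 4)
    (h : c • f = Dinf g) : f ∈ DW4 := by
  have hcf : c • f ∈ DW4 := h ▸ Dinf_mem_DW4 hg
  simpa [smul_smul, hc] using DW4.smul_of_tower_mem c⁻¹ hcf

def x33SupDW4 : Submodule SAlg Rinf := Submodule.span SAlg {xv 3 3} ⊔ DW4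

lemma Dinf_mem_x33SupDW4 {g : Rinf} (hg : g ∈ W 4) : Dinf g ∈ x33SupDW4 :=
  Submodule.mem_sup_right (Dinf_mem_DW4 hg)

lemma xv_three_mem_x33SupDW4 (n : ℕ) : xv n 3 ∈ x33SupDW4 := by
  rcases eq_or_ne n 3 with rfl | hn
  · exact Submodule.mem_sup_left (Submodule.mem_span_singleton_self _)
  · rw [← Dinf_xv_succ (k := 3) (Or.inl hn.symm)]
    exact Dinf_mem_x33SupDW4 (xv_mem_W n 4)

lemma xv_two_mul_xv_one_mem_x33SupDW4_of_ne {n : ℕ} (hn : n ≠ 2) (m : ℕ) :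
    xv n 2 * xv m 1 ∈ x33SupDW4 := by
  have h : xv n 2 * xv m 1 = Dinf (xv n 3 * xv m 1) - xv m 0 * xv n 3 := by
    simp (disch := omega) only [Derivation.leibniz, smul_eq_mul, Dinf_xv_succ]
    ring
  rw [h]
  exact sub_mem (Dinf_mem_x33SupDW4 (mem_W_mul (xv_mem_W n 3) (xv_mem_W m 1)))
    (mul_mem_of_mem_SAlg (xv0_mem m) (xv_three_mem_x33SupDW4 n))

lemma xv_two_mul_xv_one_mem_x33SupDW4 (n m : ℕ) : xv n 2 * xv m 1 ∈ x33SupDW4 := by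
  rcases eq_or_ne n 2 with rfl | hn
  swap
  · exact xv_two_mul_xv_one_mem_x33SupDW4_of_ne hn m
  rcases eq_or_ne m 2 with rfl | hm
  · refine Submodule.mem_sup_right (mem_DW4_of_smul_eq_Dinf 2 two_ne_zero
      (mem_W_mul (xv_mem_W 2 2) (xv_mem_W 2 2)) ?_)
    simp (disch := omega) only [Derivation.leibniz, smul_eq_mul, Dinf_xv_succ]
    simp only [Algebra.smul_def, map_ofNat]
    ring
  · have h : xv 2 2 * xv m 1 = Dinf (xv 2 2 * xv m 2) - xv m 2 * xv 2 1 := by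
      simp (disch := omega) only [Derivation.leibniz, smul_eq_mul, Dinf_xv_succ]
      ring
    rw [h]
    exact sub_mem (Dinf_mem_x33SupDW4 (mem_W_mul (xv_mem_W 2 2) (xv_mem_W m 2)))
      (xv_two_mul_xv_one_mem_x33SupDW4_of_ne hm 2)

lemma xv_one_mul_xv_one_mul_xv_one_mem_x33SupDW4 (n m l : ℕ) :
    xv n 1 * xv m 1 * xv l 1 ∈ x33SupDW4 := by
  have h : xv n 1 * xv m 1 * xv l 1 = Dinf (xv n 2 * xv m 1 * xv l 1)
      - xv m 0 * (xv n 2 * xv l 1) - xv l 0 * (xv n 2 * xv m 1) := by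
    simp (disch := omega) only [Derivation.leibniz, smul_eq_mul, Dinf_xv_succ]
    ring
  rw [h]
  refine sub_mem (sub_mem (Dinf_mem_x33SupDW4 ?_) ?_) ?_
  · exact mem_W_mul (mem_W_mul (xv_mem_W n 2) (xv_mem_W m 1)) (xv_mem_W l 1)
  · exact mul_mem_of_mem_SAlg (xv0_mem m) (xv_two_mul_xv_one_mem_x33SupDW4 n l)
  · exact mul_mem_of_mem_SAlg (xv0_mem l) (xv_two_mul_xv_one_mem_x33SupDW4 n m)

lemma span_posWeightProducts_three_le_x33SupDW4 :
    Submodule.span SAlg (posWeightProducts 3) ≤ x33SupDW4 := by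
  rw [Submodule.span_le]
  rintro _ ((⟨n, rfl⟩ | ⟨n, m, rfl⟩) | ⟨n, m, l, rfl⟩)
  · exact xv_three_mem_x33SupDW4 n
  · exact xv_two_mul_xv_one_mem_x33SupDW4 n m
  · exact xv_one_mul_xv_one_mul_xv_one_mem_x33SupDW4 n m l

lemma W_three_le_x33SupDW4 : W 3 ≤ x33SupDW4.restrictScalars ℚ :=
  W_three_le_span_posWeightProducts.trans
    (Submodule.restrictScalars_mono ℚ span_posWeightProducts_three_le_x33SupDW4)

lemma xv_three_zero_mul_xv_three_three_mem_DW4 : xv 3 0 * xv 3 3 ∈ DW4 := by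
  refine mem_DW4_of_smul_eq_Dinf (g := (2 : ℚ) • (xv 3 1 * xv 3 3) - xv 3 2 * xv 3 2) 2
    two_ne_zero ?_ ?_
  · exact sub_mem (Submodule.smul_mem _ _ (mem_W_mul (xv_mem_W 3 1) (xv_mem_W 3 3)))
      (mem_W_mul (xv_mem_W 3 2) (xv_mem_W 3 2))
  · simp (disch := omega) only [map_sub, Derivation.map_smul, Derivation.leibniz, smul_eq_mul,
      Dinf_xv_succ]
    simp only [Algebra.smul_def, map_ofNat]
    ring

lemma xv_zero_mul_xv_three_three_mem_DW4 {n : ℕ} (hn : 4 ≤ n) : xv n 0 * xv 3 3 ∈ DW4 := by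
  have h : xv n 0 * xv 3 3 =
      Dinf (xv 3 3 * xv n 1 - xv 3 2 * xv n 2 + xv n 3 * xv 3 1 - xv 3 0 * xv n 4) := by
    simp (disch := omega) only [map_sub, map_add, Derivation.leibniz, smul_eq_mul,
      Dinf_xv_succ, Dinf_xv_zero]
    ring
  rw [h]
  refine Dinf_mem_DW4 (sub_mem (add_mem (sub_mem ?_ ?_) ?_) ?_) <;>
    exact mem_W_mul (xv_mem_W _ _) (xv_mem_W _ _)

lemma xv_two_zero_sq_mul_xv_three_three_mem_DW4 : xv 2 0 * xv 2 0 * xv 3 3 ∈ DW4 := by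
  refine mem_DW4_of_smul_eq_Dinf (g := (6 : ℚ) • (xv 2 0 * (xv 3 3 * xv 2 1))
      - (2 : ℚ) • (xv 3 2 * (xv 2 1 * xv 2 1)) + (2 : ℚ) • (xv 2 2 * xv 2 1 * xv 3 1)
      - (2 : ℚ) • (xv 2 0 * (xv 3 2 * xv 2 2)) - xv 3 0 * (xv 2 2 * xv 2 2)) 6
    (by norm_num) ?_ ?_
  · refine sub_mem (sub_mem (add_mem (sub_mem ?_ ?_) ?_) ?_) ?_
    · exact Submodule.smul_mem _ _
        (mem_W_mul (xv_mem_W 2 0) (mem_W_mul (xv_mem_W 3 3) (xv_mem_W 2 1)))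
    · exact Submodule.smul_mem _ _
        (mem_W_mul (xv_mem_W 3 2) (mem_W_mul (xv_mem_W 2 1) (xv_mem_W 2 1)))
    · exact Submodule.smul_mem _ _
        (mem_W_mul (mem_W_mul (xv_mem_W 2 2) (xv_mem_W 2 1)) (xv_mem_W 3 1))
    · exact Submodule.smul_mem _ _
        (mem_W_mul (xv_mem_W 2 0) (mem_W_mul (xv_mem_W 3 2) (xv_mem_W 2 2)))
    · exact mem_W_mul (xv_mem_W 3 0) (mem_W_mul (xv_mem_W 2 2) (xv_mem_W 2 2))
  · simp (disch := omega) only [map_sub, map_add, Derivation.map_smul, Derivation.leibniz,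
      smul_eq_mul, Dinf_xv_succ, Dinf_xv_zero]
    simp only [Algebra.smul_def, map_ofNat]
    ring

def relIdeal : Ideal SAlg := Ideal.span (insert ((eS 2) ^ 2) {g : SAlg | ∃ n, 3 ≤ n ∧ g = eS n})

lemma relIdeal_le_comap_DW4 :
    relIdeal ≤ DW4.comap (LinearMap.toSpanSingleton SAlg Rinf (xv 3 3)) := by
  rw [relIdeal, Ideal.span_le]
  rintro _ (rfl | ⟨n, hn, rfl⟩) <;>
    simp only [SetLike.mem_coe, Submodule.mem_comap, LinearMap.toSpanSingleton_apply,
      Subalgebra.smul_def, smul_eq_mul, SubmonoidClass.coe_pow, eS]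
  · rw [sq]
    exact xv_two_zero_sq_mul_xv_three_three_mem_DW4
  · rcases hn.eq_or_lt with rfl | hn
    · exact xv_three_zero_mul_xv_three_three_mem_DW4
    · exact xv_zero_mul_xv_three_three_mem_DW4 hn

/-- `∂/∂x_{n,k}`, and `0` for out-of-range indices. -/
def pderivXv (n k : ℕ) : Derivation ℚ Rinf Rinf :=
  if h : 2 ≤ n ∧ k ≤ n then pderiv ⟨(n, k), h⟩ else 0

lemma pderivXv_of_lt {n k : ℕ} (h : n < k) : pderivXv n k = 0 :=
  dif_neg fun h' => by omega

lemma pderivXv_xv (n k : ℕ) {m l : ℕ} (h : 2 ≤ m ∧ l ≤ m) :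
    pderivXv n k (xv m l) = if n = m ∧ k = l then 1 else 0 := by
  classical
  by_cases hnk : 2 ≤ n ∧ k ≤ n
  · rw [pderivXv, dif_pos hnk, xv_eq m l h, pderiv_X, Pi.single_apply]
    simp only [Subtype.ext_iff, Prod.ext_iff, eq_comm]
  · rw [pderivXv, dif_neg hnk, if_neg (by omega), Derivation.zero_apply]

lemma pderivXv_comm (n k m l : ℕ) (p : Rinf) :
    pderivXv n k (pderivXv m l p) = pderivXv m l (pderivXv n k p) := by
  unfold pderivXv
  split_ifs with hnk hml
  · exact pderiv_comm _ _ p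
  all_goals simp

lemma lie_pderivXv_Dinf (n k : ℕ) : ⁅pderivXv n k, Dinf⁆ = pderivXv n (k + 1) := by
  refine derivation_ext fun ⟨⟨m, l⟩, hml⟩ => ?_
  rw [Derivation.commutator_apply, X_eq_xv]
  simp only at hml ⊢
  rw [pderivXv_xv n (k + 1) hml, pderivXv_xv n k hml]
  cases l with
  | zero => split_ifs <;> simp_all [Dinf_xv_zero]
  | succ l =>
    rw [Dinf_xv_succ (Or.inl (by omega)), pderivXv_xv n k (by omega)]
    split_ifs <;> simp_all

lemma constantCoeff_pderivXv_Dinf (n k : ℕ) (p : Rinf) :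
    constantCoeff (pderivXv n k (Dinf p)) = constantCoeff (pderivXv n (k + 1) p) := by
  have h := Derivation.commutator_apply (D1 := pderivXv n k) (D2 := Dinf) p
  rw [lie_pderivXv_Dinf, eq_sub_iff_add_eq] at h
  rw [← h, map_add, constantCoeff_Dinf, add_zero]

lemma constantCoeff_pderivXv_pderivXv_Dinf (n k m l : ℕ) (p : Rinf) :
    constantCoeff (pderivXv n k (pderivXv m l (Dinf p))) =
      constantCoeff (pderivXv n (k + 1) (pderivXv m l p)) +
        constantCoeff (pderivXv n k (pderivXv m (l + 1) p)) := by
  have h := Derivation.commutator_apply (D1 := pderivXv m l) (D2 := Dinf) p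
  rw [lie_pderivXv_Dinf, eq_sub_iff_add_eq] at h
  rw [← h, map_add, map_add, constantCoeff_pderivXv_Dinf, add_comm]

/-- On `s * x_{3,3}` with `s ∈ S` these read off the constant term of `s` and its coefficient of
`x_{2,0}`; the two correction terms of `classCoeff₁` make it vanish on the image of `D_∞`. -/
def classCoeff₀ (f : Rinf) : ℚ := constantCoeff (pderivXv 3 3 f)

def classCoeff₁ (f : Rinf) : ℚ :=
  constantCoeff (pderivXv 2 0 (pderivXv 3 3 f) - pderivXv 3 2 (pderivXv 2 1 f) +
    pderivXv 2 2 (pderivXv 3 1 f))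

lemma classCoeff₀_Dinf (g : Rinf) : classCoeff₀ (Dinf g) = 0 := by
  rw [classCoeff₀, constantCoeff_pderivXv_Dinf, pderivXv_of_lt (by norm_num),
    Derivation.zero_apply, map_zero]

lemma classCoeff₁_Dinf (g : Rinf) : classCoeff₁ (Dinf g) = 0 := by
  simp only [classCoeff₁, map_add, map_sub, constantCoeff_pderivXv_pderivXv_Dinf,
    Nat.reduceAdd, pderivXv_of_lt (show 3 < 4 by norm_num),
    pderivXv_of_lt (show 2 < 3 by norm_num), Derivation.zero_apply, map_zero,
    pderivXv_comm 2 1 3 3, pderivXv_comm 3 2 2 2]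
  ring

lemma pderivXv_eq_zero_of_mem_SAlg {n k : ℕ} (hk : k ≠ 0) {s : Rinf} (hs : s ∈ SAlg) :
    pderivXv n k s = 0 := by
  refine derivation_eq_zero_of_mem_SAlg _ (fun m => ?_) hs
  by_cases hm : 2 ≤ m
  · rw [pderivXv_xv n k ⟨hm, m.zero_le⟩, if_neg (by omega)]
  · rw [xv_eq_zero m 0 (by omega), map_zero]

lemma pderivXv_mul_xv_three_three {n k : ℕ} (hk : k ≠ 0) {s : Rinf} (hs : s ∈ SAlg) :
    pderivXv n k (s * xv 3 3) = if n = 3 ∧ k = 3 then s else 0 := by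
  rw [Derivation.leibniz, pderivXv_eq_zero_of_mem_SAlg hk hs, pderivXv_xv n k (by norm_num)]
  split_ifs <;> simp

lemma classCoeff₀_mul_xv_three_three {s : Rinf} (hs : s ∈ SAlg) :
    classCoeff₀ (s * xv 3 3) = constantCoeff s := by
  rw [classCoeff₀, pderivXv_mul_xv_three_three (by norm_num) hs, if_pos ⟨rfl, rfl⟩]

lemma classCoeff₁_mul_xv_three_three {s : Rinf} (hs : s ∈ SAlg) :
    classCoeff₁ (s * xv 3 3) = constantCoeff (pderivXv 2 0 s) := by
  rw [classCoeff₁, pderivXv_mul_xv_three_three (n := 3) three_ne_zero hs,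
    pderivXv_mul_xv_three_three (n := 2) one_ne_zero hs,
    pderivXv_mul_xv_three_three (n := 3) one_ne_zero hs]
  simp

def linearPart (s : Rinf) : SAlg :=
  algebraMap ℚ SAlg (constantCoeff s) + constantCoeff (pderivXv 2 0 s) • eS 2

lemma linearPart_add (x y : Rinf) : linearPart (x + y) = linearPart x + linearPart y := by
  simp only [linearPart, map_add, add_smul]
  abel

lemma linearPart_mul (x y : Rinf) :
    linearPart (x * y) = linearPart x * linearPart y -
      algebraMap ℚ SAlg (constantCoeff (pderivXv 2 0 x) * constantCoeff (pderivXv 2 0 y)) *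
        eS 2 ^ 2 := by
  simp only [linearPart, Derivation.leibniz, smul_eq_mul, map_add, map_mul, Algebra.smul_def]
  ring

lemma sub_linearPart_mem_relIdeal (s : SAlg) : s - linearPart s ∈ relIdeal := by
  obtain ⟨s, hs⟩ := s
  induction hs using Algebra.adjoin_induction with
  | mem x hx =>
    obtain ⟨n, hn, rfl⟩ := hx
    rw [linearPart, constantCoeff_xv, pderivXv_xv 2 0 ⟨hn, n.zero_le⟩, map_zero, zero_add]
    rcases hn.eq_or_lt with rfl | hn
    · rw [if_pos ⟨rfl, rfl⟩, map_one, one_smul]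
      convert zero_mem relIdeal using 1
      exact sub_eq_zero.mpr rfl
    · rw [if_neg (by omega), map_zero, zero_smul, sub_zero]
      exact Ideal.subset_span (Set.mem_insert_of_mem _ ⟨n, hn, rfl⟩)
  | algebraMap r =>
    have hr : constantCoeff (algebraMap ℚ Rinf r) = r := constantCoeff_C _ r
    rw [linearPart, Derivation.map_algebraMap, map_zero, zero_smul, add_zero, hr]
    convert zero_mem relIdeal using 1
    exact sub_eq_zero.mpr rfl
  | add x y hx hy ihx ihy =>
    convert add_mem ihx ihy using 1
    rw [linearPart_add]
    change (⟨x, hx⟩ + ⟨y, hy⟩ : SAlg) - _ = _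
    abel
  | mul x y hx hy ihx ihy =>
    have key : (⟨x * y, mul_mem hx hy⟩ : SAlg) - linearPart (x * y) =
        ⟨x, hx⟩ * ((⟨y, hy⟩ : SAlg) - linearPart y) +
          ((⟨x, hx⟩ : SAlg) - linearPart x) * linearPart y +
          algebraMap ℚ SAlg (constantCoeff (pderivXv 2 0 x) * constantCoeff (pderivXv 2 0 y)) *
            eS 2 ^ 2 := by
      rw [linearPart_mul]
      change (⟨x, hx⟩ * ⟨y, hy⟩ : SAlg) - _ = _
      ring
    rw [key]
    exact add_mem (add_mem (Ideal.mul_mem_left _ _ ihy) (Ideal.mul_mem_right _ _ ihx))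
      (Ideal.mul_mem_left _ _ (Ideal.subset_span (Set.mem_insert _ _)))

lemma mem_relIdeal_of_mul_mem_DW4 {s : SAlg} (h : (s : Rinf) * xv 3 3 ∈ DW4) :
    s ∈ relIdeal := by
  obtain ⟨g, -, hg⟩ := h
  have h₀ := classCoeff₀_mul_xv_three_three s.2
  have h₁ := classCoeff₁_mul_xv_three_three s.2
  rw [← hg, Derivation.coeFn_coe, classCoeff₀_Dinf] at h₀
  rw [← hg, Derivation.coeFn_coe, classCoeff₁_Dinf] at h₁
  simpa [linearPart, ← h₀, ← h₁] using sub_linearPart_mem_relIdeal s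

/-- The `S`-module map `S → R_∞^{(3)}/D_∞(R_∞^{(4)})`, `s ↦ [s·x_{3,3}]`, is surjective with
kernel the ideal of `S` generated by `x_{2,0}²` and the `x_{n,0}` with `n ≥ 3`; hence
`R_∞^{(3)}/D_∞(R_∞^{(4)}) ≅ S/(x_{2,0}², x_{n,0} : n ≥ 3)` (the computation of
`H_st^odd(Λ⁴H̃_ℚ)`). -/
theorem statement14 :
    (∀ f ∈ W 3, ∃ s : SAlg,
        f - (s : Rinf) * xv 3 3 ∈ Submodule.map Dinf.toLinearMap (W 4)) ∧
    (∀ s : SAlg,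
        ((s : Rinf) * xv 3 3 ∈ Submodule.map Dinf.toLinearMap (W 4)) ↔
          s ∈ Ideal.span (insert ((eS 2) ^ 2) {g : SAlg | ∃ n, 3 ≤ n ∧ g = eS n})) := by
  refine ⟨fun f hf => ?_, fun s => ⟨mem_relIdeal_of_mul_mem_DW4, fun hs => ?_⟩⟩
  · obtain ⟨y, hy, z, hz, rfl⟩ := Submodule.mem_sup.mp (W_three_le_x33SupDW4 hf)
    obtain ⟨s, rfl⟩ := Submodule.mem_span_singleton.mp hy
    refine ⟨s, ?_⟩
    rwa [Subalgebra.smul_def, smul_eq_mul, add_sub_cancel_left]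
  · change (s : Rinf) * xv 3 3 ∈ DW4
    simpa [Subalgebra.smul_def] using relIdeal_le_comap_DW4 hs

end
end

section
/- Let M := A/(e₁², e₂², e₁e₂, e₃). Then the ℚ-vector space H_j(A; M) = Tor_j^A(ℚ, M) has dimension 1 for j = 0, dimension 4 for j = 1, dimension 5 for j = 2, dimension 2 for j = 3, and is zero for j ≥ 4. -/
open CategoryTheory MvPolynomial

noncomputable section

/-- `A = ℚ[e₁, e₂, e₃]`, the polynomial ring in three variables over `ℚ`;
the variable `eᵢ` is `X (i-1) : A` for `i = 1, 2, 3`. -/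
abbrev A : Type := MvPolynomial (Fin 3) ℚ

/-- `ℚ` as an `A`-module via the augmentation sending each variable to `0`. -/
instance : Module A ℚ :=
  Module.compHom ℚ (MvPolynomial.aeval (fun _ : Fin 3 => (0 : ℚ))).toRingHom

/-- `H_j(A; M) = Tor_j^A(ℚ, M)`, as a `ℚ`-vector space (via restriction of scalars along
`ℚ → A`). -/
def TorQ (j : ℕ) (M : ModuleCat A) : ModuleCat ℚ :=
  (ModuleCat.restrictScalars (algebraMap ℚ A)).obj
    (((Tor (ModuleCat A) j).obj (ModuleCat.of A ℚ)).obj M)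

/-- The `A`-module `M = A/(e₁², e₂², e₁e₂, e₃)`. -/
def M17 : ModuleCat A :=
  ModuleCat.of A
    (A ⧸ Ideal.span {(X 0 : A) ^ 2, (X 1 : A) ^ 2, (X 0 : A) * X 1, (X 2 : A)})

/-!
`M` has the explicit free resolution
`0 → A² --d₃--> A⁵ --d₂--> A⁴ --d₁--> A → M → 0`, with `d₁ = (e₁², e₂², e₁e₂, e₃)`.
Exactness is checked by hand: the variables are prime in `A`, and substituting `e₃ = 0` splits a
syzygy of `d₁` into a syzygy of `(e₁², e₂², e₁e₂)` plus a multiple of `e₃`. Every entry of the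
`dᵢ` has zero constant term, so `ℚ ⊗_A dᵢ = 0` and `Tor_j^A(ℚ, M) ≅ ℚ ⊗_A A^{b_j} = ℚ^{b_j}`
with `(b_j) = (1, 4, 5, 2, 0, 0, …)`.
-/

open MonoidalCategory Matrix

universe u v w

namespace MvPolynomial

variable {σ R : Type*}

theorem X_dvd_sub_aeval_update_zero [CommRing R] [DecidableEq σ] (i : σ)
    (p : MvPolynomial σ R) : X i ∣ p - aeval (Function.update X i 0) p := by
  induction p using MvPolynomial.induction_on with
  | C a => simp
  | add p q hp hq => simpa [add_sub_add_comm] using dvd_add hp hq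
  | mul_X p j hp =>
    rcases eq_or_ne j i with rfl | hj
    · simp
    · simpa [hj, ← sub_mul] using dvd_mul_of_dvd_left hp (X j)

variable [CommRing R] [IsDomain R] {i j k : σ}

theorem X_dvd_of_dvd_X_pow_mul (hij : i ≠ j) {p : MvPolynomial σ R} {n : ℕ}
    (h : X i ∣ X j ^ n * p) : X i ∣ p :=
  (X_prime.dvd_or_dvd h).resolve_left fun h' => hij (X_dvd_X.mp (X_prime.dvd_of_dvd_pow h'))

theorem exists_syzygy_X_sq_X_sq_X_mul_X (hij : i ≠ j) {p₁ p₂ p₃ : MvPolynomial σ R}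
    (h : X i ^ 2 * p₁ + X j ^ 2 * p₂ + X i * X j * p₃ = 0) :
    ∃ a b, p₁ = X j * a ∧ p₂ = X i * b ∧ p₃ = -(X i * a) - X j * b := by
  obtain ⟨b, hb⟩ : X i ∣ p₂ :=
    X_dvd_of_dvd_X_pow_mul hij (n := 2) ⟨-(X i * p₁ + X j * p₃), by linear_combination h⟩
  have h' : X i * p₁ + X j ^ 2 * b + X j * p₃ = 0 := by
    rw [← X_mul_cancel_left_iff (i := i), mul_zero]
    linear_combination h - X j ^ 2 * hb
  obtain ⟨a, ha⟩ : X j ∣ p₁ :=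
    X_dvd_of_dvd_X_pow_mul hij.symm (n := 1) ⟨-(X j * b + p₃), by linear_combination h'⟩
  refine ⟨a, b, ha, hb, ?_⟩
  rw [← X_mul_cancel_left_iff (i := j)]
  linear_combination h' - X i * ha

theorem exists_syzygy_X_sq_X_sq_X_mul_X_X [DecidableEq σ] (hij : i ≠ j) (hik : i ≠ k)
    (hjk : j ≠ k) {p₁ p₂ p₃ p₄ : MvPolynomial σ R}
    (h : X i ^ 2 * p₁ + X j ^ 2 * p₂ + X i * X j * p₃ + X k * p₄ = 0) :
    ∃ a b q₁ q₂ q₃, p₁ = X j * a + X k * q₁ ∧ p₂ = X i * b + X k * q₂ ∧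
      p₃ = -(X i * a) - X j * b + X k * q₃ ∧
      p₄ = -(X i ^ 2 * q₁) - X j ^ 2 * q₂ - X i * X j * q₃ := by
  set τ := aeval (R := R) (Function.update (X : σ → MvPolynomial σ R) k 0)
  obtain ⟨q₁, hq₁⟩ := X_dvd_sub_aeval_update_zero k p₁
  obtain ⟨q₂, hq₂⟩ := X_dvd_sub_aeval_update_zero k p₂
  obtain ⟨q₃, hq₃⟩ := X_dvd_sub_aeval_update_zero k p₃
  have hτ : X i ^ 2 * τ p₁ + X j ^ 2 * τ p₂ + X i * X j * τ p₃ = 0 := by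
    simpa [τ, hik, hjk] using congrArg τ h
  obtain ⟨a, b, ha, hb, hab⟩ := exists_syzygy_X_sq_X_sq_X_mul_X hij hτ
  refine ⟨a, b, q₁, q₂, q₃, by linear_combination hq₁ + ha, by linear_combination hq₂ + hb,
    by linear_combination hq₃ + hab, ?_⟩
  rw [← X_mul_cancel_left_iff (i := k)]
  linear_combination h - X i ^ 2 * (hq₁ + ha) - X j ^ 2 * (hq₂ + hb) - X i * X j * (hq₃ + hab)

theorem exists_second_syzygy_X_sq_X_sq_X_mul_X_X (hik : i ≠ k) (hjk : j ≠ k)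
    {a₁ a₂ b₁ b₂ b₃ : MvPolynomial σ R} (e₁ : X j * a₁ + X k * b₁ = 0)
    (e₂ : X i * a₂ + X k * b₂ = 0) (e₃ : -(X i * a₁) - X j * a₂ + X k * b₃ = 0) :
    ∃ c₁ c₂, a₁ = X k * c₁ ∧ a₂ = X k * c₂ ∧ b₁ = -(X j * c₁) ∧ b₂ = -(X i * c₂) ∧
      b₃ = X i * c₁ + X j * c₂ := by
  obtain ⟨c₁, hc₁⟩ : X k ∣ a₁ :=
    X_dvd_of_dvd_X_pow_mul hjk.symm (n := 1) ⟨-b₁, by linear_combination e₁⟩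
  obtain ⟨c₂, hc₂⟩ : X k ∣ a₂ :=
    X_dvd_of_dvd_X_pow_mul hik.symm (n := 1) ⟨-b₂, by linear_combination e₂⟩
  refine ⟨c₁, c₂, hc₁, hc₂, ?_, ?_, ?_⟩ <;> rw [← X_mul_cancel_left_iff (i := k)]
  · linear_combination e₁ - X j * hc₁
  · linear_combination e₂ - X i * hc₂
  · linear_combination e₃ + X i * hc₁ + X j * hc₂

end MvPolynomial

namespace Matrix

variable {R : Type*} [CommRing R] {l m n : Type*} [Fintype m] [Fintype n]

theorem range_mulVecLin_eq_ker_of_mul_eq_zero {M : Matrix l m R} {N : Matrix m n R}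
    (hMN : M * N = 0) (h : ∀ v, M *ᵥ v = 0 → ∃ u, N *ᵥ u = v) :
    LinearMap.range N.mulVecLin = LinearMap.ker M.mulVecLin :=
  le_antisymm (LinearMap.range_le_ker_iff.mpr (by rw [← mulVecLin_mul, hMN, mulVecLin_zero]))
    fun v hv => h v hv

end Matrix

namespace ModuleCat

section Resolution

variable {S : Type v} [Ring S] {M : ModuleCat.{w} S} (X : ℕ → ModuleCat.{w} S)
  [∀ n, Projective (X n)] (d : ∀ n, X (n + 1) ⟶ X n)
  (hd : ∀ n, LinearMap.range (d (n + 1)).hom = LinearMap.ker (d n).hom)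
  (π : X 0 ⟶ M) (hπ : Function.Surjective π)
  (hdπ : LinearMap.range (d 0).hom = LinearMap.ker π.hom)

def projectiveResolutionOfExact : ProjectiveResolution M where
  complex := ChainComplex.of X d fun n =>
    hom_ext (LinearMap.range_le_ker_iff.mp (hd n).le)
  π := (ChainComplex.toSingle₀Equiv _ M).symm
    ⟨π, hom_ext (LinearMap.range_le_ker_iff.mp hdπ.le)⟩
  quasiIso := ⟨fun n => by
    cases n with
    | zero =>
      rw [ChainComplex.quasiIsoAt₀_iff, ShortComplex.quasiIso_iff_of_zeros']
      · exact ⟨(ShortComplex.moduleCat_exact_iff_range_eq_ker _).mpr hdπ,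
          (epi_iff_surjective _).mpr hπ⟩
      all_goals rfl
    | succ n =>
      rw [quasiIsoAt_iff_exactAt' _ _ (ChainComplex.exactAt_succ_single_obj _ _),
        HomologicalComplex.exactAt_iff' _ (n + 1 + 1) (n + 1) n (by simp) (by simp),
        ShortComplex.moduleCat_exact_iff_range_eq_ker]
      simp only [HomologicalComplex.shortComplexFunctor'_obj_f,
        HomologicalComplex.shortComplexFunctor'_obj_g, ChainComplex.of_d]
      exact hd n⟩

theorem projectiveResolutionOfExact_complex_d (n : ℕ) :
    (projectiveResolutionOfExact X d hd π hπ hdπ).complex.d (n + 1) n = d n :=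
  ChainComplex.of_d _ _ n

end Resolution

theorem whiskerLeft_ofHom_mulVecLin_eq_zero {R : Type u} [CommRing R] (N : ModuleCat.{u} R)
    {m n : Type u} [Fintype m] [DecidableEq m] [Fintype n] (D : Matrix m n R)
    (hD : ∀ i j (q : N), D i j • q = 0) : N ◁ ofHom D.mulVecLin = 0 := by
  refine hom_ext (TensorProduct.ext' fun q v => ?_)
  refine (TensorProduct.piScalarRight R R N m).injective (funext fun i => ?_)
  rw [MonoidalCategory.whiskerLeft_apply]
  simp [mulVec, dotProduct, Finset.sum_smul, mul_comm (D i _), mul_smul, hD]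

def restrictScalarsLinearEquiv {R : Type u} {S : Type v} [Ring R] [Ring S] (f : R →+* S)
    {N : ModuleCat.{w} S} {V : Type*} [AddCommGroup V] [Module R V] [Module S V]
    (hV : ∀ (r : R) (v : V), f r • v = r • v) (e : N ≃ₗ[S] V) :
    (restrictScalars f).obj N ≃ₗ[R] V :=
  { e.toAddEquiv with map_smul' := fun r v => (e.map_smul (f r) v).trans (hV r (e v)) }

end ModuleCat

namespace CategoryTheory.ProjectiveResolution

variable {C : Type*} [Category C] [MonoidalCategory C] [Abelian C] [MonoidalPreadditive C]
  [HasProjectiveResolutions C]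

def torIsoOfWhiskerLeftEqZero {X Y : C} (P : ProjectiveResolution Y)
    (h : ∀ n, X ◁ P.complex.d (n + 1) n = 0) (n : ℕ) :
    ((Tor C n).obj X).obj Y ≅ X ⊗ P.complex.X n :=
  let K := (((tensoringLeft C).obj X).mapHomologicalComplex _).obj P.complex
  have hK : ∀ i j, K.d i j = 0 := fun i j => by
    by_cases hij : (ComplexShape.down ℕ).Rel i j
    · obtain rfl : j + 1 = i := hij
      exact h j
    · exact K.shape i j hij
  P.isoLeftDerivedObj _ n ≪≫
    (ShortComplex.LeftHomologyData.ofZeros (K.sc n) (hK _ _) (hK _ _)).homologyIso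

end CategoryTheory.ProjectiveResolution

namespace M17

local notation "x" => (X 0 : A)
local notation "y" => (X 1 : A)
local notation "z" => (X 2 : A)

def d₁ : Matrix (Fin 1) (Fin 4) A := !![x ^ 2, y ^ 2, x * y, z]

def d₂ : Matrix (Fin 4) (Fin 5) A :=
  !![y, 0, z, 0, 0;
     0, x, 0, z, 0;
     -x, -y, 0, 0, z;
     0, 0, -(x ^ 2), -(y ^ 2), -(x * y)]

def d₃ : Matrix (Fin 5) (Fin 2) A :=
  !![z, 0;
     0, z;
     -y, 0;
     0, -x;
     x, y]

theorem d₁_mul_d₂ : d₁ * d₂ = 0 := by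
  refine Matrix.ext fun i j => ?_
  fin_cases i
  fin_cases j <;> simp [d₁, d₂, mul_apply, Fin.sum_univ_succ] <;> ring

theorem d₂_mul_d₃ : d₂ * d₃ = 0 := by
  refine Matrix.ext fun i j => ?_
  fin_cases i <;> fin_cases j <;> simp [d₂, d₃, mul_apply, Fin.sum_univ_succ] <;> ring

theorem exists_mulVec_d₂_eq {v : Fin 4 → A} (hv : d₁ *ᵥ v = 0) : ∃ u, d₂ *ᵥ u = v := by
  have h : x ^ 2 * v 0 + y ^ 2 * v 1 + x * y * v 2 + z * v 3 = 0 := by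
    simpa [d₁, mulVec, dotProduct, Fin.sum_univ_succ, add_assoc] using congrFun hv 0
  obtain ⟨a, b, q₁, q₂, q₃, h₁, h₂, h₃, h₄⟩ :=
    exists_syzygy_X_sq_X_sq_X_mul_X_X (by decide) (by decide) (by decide) h
  refine ⟨![a, b, q₁, q₂, q₃], funext fun i => ?_⟩
  fin_cases i <;> simp [d₂, mulVec, dotProduct, Fin.sum_univ_succ, h₁, h₂, h₃, h₄] <;> ring

theorem exists_mulVec_d₃_eq {v : Fin 5 → A} (hv : d₂ *ᵥ v = 0) : ∃ u, d₃ *ᵥ u = v := by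
  have h₁ : y * v 0 + z * v 2 = 0 := by
    simpa [d₂, mulVec, dotProduct, Fin.sum_univ_succ] using congrFun hv 0
  have h₂ : x * v 1 + z * v 3 = 0 := by
    simpa [d₂, mulVec, dotProduct, Fin.sum_univ_succ] using congrFun hv 1
  have h₃ : -(x * v 0) - y * v 1 + z * v 4 = 0 := by
    simpa [d₂, mulVec, dotProduct, Fin.sum_univ_succ, sub_eq_add_neg, add_assoc]
      using congrFun hv 2
  obtain ⟨c₁, c₂, e₁, e₂, e₃, e₄, e₅⟩ :=
    exists_second_syzygy_X_sq_X_sq_X_mul_X_X (by decide) (by decide) h₁ h₂ h₃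
  refine ⟨![c₁, c₂], funext fun i => ?_⟩
  fin_cases i <;> simp [d₃, mulVec, dotProduct, Fin.sum_univ_succ, e₁, e₂, e₃, e₄, e₅]

theorem ker_mulVecLin_d₃ : LinearMap.ker d₃.mulVecLin = ⊥ := by
  refine LinearMap.ker_eq_bot'.mpr fun w hw => funext fun i => ?_
  have h₁ : z * w 0 = 0 := by simpa [d₃, mulVec, dotProduct] using congrFun hw 0
  have h₂ : z * w 1 = 0 := by simpa [d₃, mulVec, dotProduct] using congrFun hw 1
  fin_cases i
  · exact (mul_eq_zero.mp h₁).resolve_left (X_ne_zero _)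
  · exact (mul_eq_zero.mp h₂).resolve_left (X_ne_zero _)

def betti : ℕ → ℕ
  | 0 => 1
  | 1 => 4
  | 2 => 5
  | 3 => 2
  | _ + 4 => 0

def resolutionMatrix : ∀ n, Matrix (Fin (betti n)) (Fin (betti (n + 1))) A
  | 0 => d₁
  | 1 => d₂
  | 2 => d₃
  | _ + 3 => 0

theorem range_mulVecLin_resolutionMatrix (n : ℕ) :
    LinearMap.range (resolutionMatrix (n + 1)).mulVecLin =
      LinearMap.ker (resolutionMatrix n).mulVecLin := by
  match n with
  | 0 => exact range_mulVecLin_eq_ker_of_mul_eq_zero d₁_mul_d₂ fun _ => exists_mulVec_d₂_eq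
  | 1 => exact range_mulVecLin_eq_ker_of_mul_eq_zero d₂_mul_d₃ fun _ => exists_mulVec_d₃_eq
  | 2 =>
    change LinearMap.range (0 : Matrix (Fin 2) (Fin 0) A).mulVecLin = LinearMap.ker d₃.mulVecLin
    rw [ker_mulVecLin_d₃, mulVecLin_zero, LinearMap.range_zero]
  | _ + 3 => exact Subsingleton.elim (α := Submodule A (Fin 0 → A)) _ _

theorem constantCoeff_resolutionMatrix (n : ℕ) :
    ∀ i j, constantCoeff (resolutionMatrix n i j) = 0 := by
  match n with
  | 0 =>
    change ∀ i j, constantCoeff (d₁ i j) = 0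
    intro i j; fin_cases i; fin_cases j <;> simp [d₁]
  | 1 =>
    change ∀ i j, constantCoeff (d₂ i j) = 0
    intro i j; fin_cases i <;> fin_cases j <;> simp [d₂]
  | 2 =>
    change ∀ i j, constantCoeff (d₃ i j) = 0
    intro i j; fin_cases i <;> fin_cases j <;> simp [d₃]
  | _ + 3 => exact fun _ _ => rfl

def augmentation : ModuleCat.of A (Fin (betti 0) → A) ⟶ M17 :=
  ModuleCat.ofHom ((Ideal.span {x ^ 2, y ^ 2, x * y, z}).mkQ ∘ₗ LinearMap.proj (0 : Fin 1))

theorem augmentation_surjective : Function.Surjective augmentation := fun m => by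
  obtain ⟨a, rfl⟩ := Ideal.Quotient.mk_surjective m
  exact ⟨fun _ => a, rfl⟩

theorem range_mulVecLin_d₁ :
    LinearMap.range (resolutionMatrix 0).mulVecLin = LinearMap.ker augmentation.hom := by
  have hgens : ({x ^ 2, y ^ 2, x * y, z} : Set A) = Set.range ![x ^ 2, y ^ 2, x * y, z] := by
    ext; simp; tauto
  change LinearMap.range d₁.mulVecLin =
    LinearMap.ker ((Ideal.span {x ^ 2, y ^ 2, x * y, z}).mkQ ∘ₗ LinearMap.proj (0 : Fin 1))
  ext v
  simp only [LinearMap.mem_range, LinearMap.mem_ker, LinearMap.comp_apply, LinearMap.proj_apply,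
    Submodule.mkQ_apply, Submodule.Quotient.mk_eq_zero]
  rw [hgens, Ideal.mem_span_range_iff_exists_fun]
  constructor
  · rintro ⟨u, rfl⟩
    exact ⟨u, by simp [d₁, mulVec, dotProduct, Fin.sum_univ_succ]; ring⟩
  · rintro ⟨c, hc⟩
    refine ⟨c, funext fun i => ?_⟩
    fin_cases i
    simp [d₁, mulVec, dotProduct, Fin.sum_univ_succ] at hc ⊢
    linear_combination hc

def resolution : ProjectiveResolution M17 :=
  ModuleCat.projectiveResolutionOfExact (fun n => ModuleCat.of A (Fin (betti n) → A))
    (fun n => ModuleCat.ofHom (resolutionMatrix n).mulVecLin) range_mulVecLin_resolutionMatrix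
    augmentation augmentation_surjective range_mulVecLin_d₁

theorem smul_eq_constantCoeff_mul (a : A) (q : ℚ) : a • q = constantCoeff a * q := by
  change aeval _ a * q = _
  rw [aeval_zero']
  rfl

def torIso (j : ℕ) : ((Tor (ModuleCat A) j).obj (ModuleCat.of A ℚ)).obj M17 ≅
    ModuleCat.of A ℚ ⊗ ModuleCat.of A (Fin (betti j) → A) :=
  resolution.torIsoOfWhiskerLeftEqZero (fun n => by
    rw [resolution, ModuleCat.projectiveResolutionOfExact_complex_d]
    exact ModuleCat.whiskerLeft_ofHom_mulVecLin_eq_zero _ _ fun i j q => by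
      rw [smul_eq_constantCoeff_mul, constantCoeff_resolutionMatrix, zero_mul]) j

def torLinearEquiv (j : ℕ) : TorQ j M17 ≃ₗ[ℚ] (Fin (betti j) → ℚ) :=
  ((ModuleCat.restrictScalars (algebraMap ℚ A)).mapIso (torIso j)).toLinearEquiv ≪≫ₗ
    ModuleCat.restrictScalarsLinearEquiv _
      (fun q v => funext fun i => by simp [smul_eq_constantCoeff_mul, algebraMap_eq])
      (TensorProduct.piScalarRight A A ℚ (Fin (betti j)))

theorem finrank_torQ (j : ℕ) : Module.finrank ℚ (TorQ j M17) = betti j := by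
  rw [(torLinearEquiv j).finrank_eq, Module.finrank_fin_fun]

theorem subsingleton_torQ {j : ℕ} (hj : 4 ≤ j) : Subsingleton (TorQ j M17) := by
  obtain ⟨m, rfl⟩ := Nat.exists_eq_add_of_le' hj
  have : Subsingleton (Fin (betti (m + 4)) → ℚ) := (inferInstance : Subsingleton (Fin 0 → ℚ))
  exact (torLinearEquiv _).toEquiv.subsingleton

end M17

/-- `Tor_j^A(ℚ, A/(e₁², e₂², e₁e₂, e₃))` has `ℚ`-dimension `1, 4, 5, 2` for `j = 0, 1, 2, 3`
and vanishes for `j ≥ 4`. -/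
theorem statement17 :
    Module.finrank ℚ (TorQ 0 M17) = 1 ∧
    Module.finrank ℚ (TorQ 1 M17) = 4 ∧
    Module.finrank ℚ (TorQ 2 M17) = 5 ∧
    Module.finrank ℚ (TorQ 3 M17) = 2 ∧
    ∀ j : ℕ, 4 ≤ j → Subsingleton (TorQ j M17) :=
  ⟨M17.finrank_torQ 0, M17.finrank_torQ 1, M17.finrank_torQ 2, M17.finrank_torQ 3,
    fun _ => M17.subsingleton_torQ⟩

end
end
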